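/- Let f be a probability density on ℝ² supported on the closed unit disk, let θ ≥ 0, and let R_θ denote rotation of the plane by angle θ. Then for every p ≥ 1, the 1-D p-Wasserstein distance between the line projection of f at angle 0 and the line projection of f ∘ R_θ^{-1} at angle 0 satisfies d_{Wp}(P₀ f, P₀ (f ∘ R_θ^{-1})) ≤ θ. Equivalently, if two lines through the origin differ by angle θ, the p-Wasserstein distance between the corresponding 1-D projections of f is at most θ. -/

import Mathlib

open MeasureTheory Real Set

/-- CDF of a density `μ` on `ℝ`: `F_μ(t) = ∫_{-∞}^t μ`. -/
noncomputable def cdfOf (μ : ℝ → ℝ) (t : ℝ) : ℝ := ∫ x in Set.Iic t, μ x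

/-- Quantile function `Q_μ(z) = inf {t : F_μ(t) ≥ z}`. -/
noncomputable def quantileOf (μ : ℝ → ℝ) (z : ℝ) : ℝ := sInf {t : ℝ | z ≤ cdfOf μ t}

/-- `d_{Wp}^p(μ, ν) = ∫₀¹ |Q_μ(z) − Q_ν(z)|^p dz`. -/
noncomputable def wassersteinPow (p : ℝ) (μ ν : ℝ → ℝ) : ℝ :=
  ∫ z in Set.Ioo (0:ℝ) 1, |quantileOf μ z - quantileOf ν z| ^ p

/-- 1-D `p`-Wasserstein distance between densities. -/
noncomputable def wasserstein (p : ℝ) (μ ν : ℝ → ℝ) : ℝ :=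
  (wassersteinPow p μ ν) ^ (1 / p)

/-- Line projection of an image `f : ℝ² → ℝ` at angle `θ`:
`P_θ f(s) = ∫ f(s(cos θ, sin θ) + t(−sin θ, cos θ)) dt`. -/
noncomputable def lineProj (f : ℝ × ℝ → ℝ) (θ : ℝ) (s : ℝ) : ℝ :=
  ∫ t : ℝ, f (s * Real.cos θ - t * Real.sin θ, s * Real.sin θ + t * Real.cos θ)

/-- `d_{SWp}^p(f, g) = (1/2π) ∫₀^{2π} d_{Wp}^p(P_θ f, P_θ g) dθ`. -/
noncomputable def slicedWassersteinPow (p : ℝ) (f g : ℝ × ℝ → ℝ) : ℝ :=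
  (1 / (2 * Real.pi)) * ∫ θ in Set.Ioo (0:ℝ) (2 * Real.pi),
    wassersteinPow p (lineProj f θ) (lineProj g θ)

/-- Sliced `p`-Wasserstein distance between two images. -/
noncomputable def slicedWasserstein (p : ℝ) (f g : ℝ × ℝ → ℝ) : ℝ :=
  (slicedWassersteinPow p f g) ^ (1 / p)

/-- Rotation of an image by angle `α`: `(R_α g)(x) = g(R_α⁻¹ x)`. -/
noncomputable def rotImage (α : ℝ) (g : ℝ × ℝ → ℝ) : ℝ × ℝ → ℝ :=
  fun x => g (x.1 * Real.cos α + x.2 * Real.sin α, -x.1 * Real.sin α + x.2 * Real.cos α)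

/-!
The CDF of `P_φ f` at `a` is the `f`-mass of the half-plane `{x | ⟪x, u_φ⟫ ≤ a}`, where
`u_φ = (cos φ, sin φ)`. On the unit disk `|⟪x, u_φ⟫ - ⟪x, u_ψ⟫| ≤ ‖u_φ - u_ψ‖ ≤ |φ - ψ|`, so the
half-planes at level `a` for `φ` and at level `a + |φ - ψ|` for `ψ` are nested where `f` lives.
Hence the two CDFs are shifts of each other by at most `|φ - ψ|`, the quantile functions are
uniformly `|φ - ψ|`-close on `(0, 1)`, and every `d_{Wp}` is at most `|φ - ψ|`. Rotating `f` by `θ`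
turns the projection at angle `0` into the projection at angle `-θ`.
-/

noncomputable def planeRotation (φ : ℝ) : (ℝ × ℝ) →ₗ[ℝ] (ℝ × ℝ) :=
  Matrix.toLin (Module.Basis.finTwoProd ℝ) (Module.Basis.finTwoProd ℝ)
    !![cos φ, -sin φ; sin φ, cos φ]

@[simp]
lemma planeRotation_apply (φ : ℝ) (x : ℝ × ℝ) :
    planeRotation φ x = (x.1 * cos φ - x.2 * sin φ, x.1 * sin φ + x.2 * cos φ) := by
  rw [planeRotation, Matrix.toLin_finTwoProd_apply, Prod.mk.injEq]
  constructor <;> ring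

lemma det_planeRotation (φ : ℝ) : LinearMap.det (planeRotation φ) = 1 := by
  rw [planeRotation, LinearMap.det_toLin, Matrix.det_fin_two_of]
  linear_combination sin_sq_add_cos_sq φ

lemma measurePreserving_planeRotation (φ : ℝ) :
    MeasurePreserving (planeRotation φ) (volume : Measure (ℝ × ℝ)) volume := by
  refine ⟨(planeRotation φ).continuous_of_finiteDimensional.measurable, ?_⟩
  rw [Measure.map_linearMap_addHaar_eq_smul_addHaar volume (by simp [det_planeRotation]),
    det_planeRotation]
  simp

lemma measurableEmbedding_planeRotation (φ : ℝ) : MeasurableEmbedding (planeRotation φ) :=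
  ((planeRotation φ).equivOfDetNeZero (by simp [det_planeRotation])).toContinuousLinearEquiv
    |>.toHomeomorph.measurableEmbedding

lemma lineProj_eq_integral_planeRotation (f : ℝ × ℝ → ℝ) (φ s : ℝ) :
    lineProj f φ s = ∫ t, f (planeRotation φ (s, t)) := by
  simp [lineProj]

lemma lineProj_rotImage (α θ : ℝ) (g : ℝ × ℝ → ℝ) :
    lineProj (rotImage α g) θ = lineProj g (θ - α) := by
  ext s
  simp only [lineProj, rotImage, cos_sub, sin_sub]
  congr 1 with t
  ring_nf

lemma cdfOf_lineProj {f : ℝ × ℝ → ℝ} (hf : Integrable f) (φ a : ℝ) :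
    cdfOf (lineProj f φ) a = ∫ x in {x : ℝ × ℝ | x.1 * cos φ + x.2 * sin φ ≤ a}, f x := by
  have hfR : IntegrableOn (fun x => f (planeRotation φ x)) (Iic a ×ˢ univ)
      (volume.prod volume) := by
    rw [← Measure.volume_eq_prod]
    exact ((measurePreserving_planeRotation φ).integrable_comp_emb
      (measurableEmbedding_planeRotation φ)).2 hf |>.integrableOn
  have hpre : Iic a ×ˢ univ =
      planeRotation φ ⁻¹' {x : ℝ × ℝ | x.1 * cos φ + x.2 * sin φ ≤ a} := by
    ext x
    have hcoord : (x.1 * cos φ - x.2 * sin φ) * cos φ + (x.1 * sin φ + x.2 * cos φ) * sin φ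
        = x.1 := by linear_combination x.1 * sin_sq_add_cos_sq φ
    simp [hcoord]
  calc cdfOf (lineProj f φ) a = ∫ x in Iic a ×ˢ univ, f (planeRotation φ x) := by
        rw [Measure.volume_eq_prod, setIntegral_prod _ hfR]
        simp [cdfOf, lineProj_eq_integral_planeRotation]
    _ = _ := by
        rw [hpre, (measurePreserving_planeRotation φ).setIntegral_preimage_emb
          (measurableEmbedding_planeRotation φ)]

def unitDisk : Set (ℝ × ℝ) := {x | x.1 ^ 2 + x.2 ^ 2 ≤ 1}

lemma measurableSet_unitDisk : MeasurableSet unitDisk :=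
  measurableSet_le (by fun_prop) measurable_const

lemma abs_inner_dir_le_one {x : ℝ × ℝ} (hx : x ∈ unitDisk) (φ : ℝ) :
    |x.1 * cos φ + x.2 * sin φ| ≤ 1 := by
  refine abs_le_of_sq_le_sq ?_ zero_le_one
  have hx' : x.1 ^ 2 + x.2 ^ 2 ≤ 1 := hx
  nlinarith [sq_nonneg (x.1 * sin φ - x.2 * cos φ), sin_sq_add_cos_sq φ]

lemma abs_inner_dir_sub_le {x : ℝ × ℝ} (hx : x ∈ unitDisk) (φ ψ : ℝ) :
    |(x.1 * cos φ + x.2 * sin φ) - (x.1 * cos ψ + x.2 * sin ψ)| ≤ |φ - ψ| := by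
  have hx' : x.1 ^ 2 + x.2 ^ 2 ≤ 1 := hx
  have hchord : (cos φ - cos ψ) ^ 2 + (sin φ - sin ψ) ^ 2 = 2 - 2 * cos (φ - ψ) := by
    rw [cos_sub]
    linear_combination sin_sq_add_cos_sq φ + sin_sq_add_cos_sq ψ
  have hcos : 1 - (φ - ψ) ^ 2 / 2 ≤ cos (φ - ψ) := one_sub_sq_div_two_le_cos
  have hcauchy : (x.1 * (cos φ - cos ψ) + x.2 * (sin φ - sin ψ)) ^ 2 ≤
      (x.1 ^ 2 + x.2 ^ 2) * ((cos φ - cos ψ) ^ 2 + (sin φ - sin ψ) ^ 2) := by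
    nlinarith [sq_nonneg (x.1 * (sin φ - sin ψ) - x.2 * (cos φ - cos ψ))]
  rw [← sq_le_sq]
  nlinarith [sq_nonneg (cos φ - cos ψ), sq_nonneg (sin φ - sin ψ)]

section DiskSupported

variable {f : ℝ × ℝ → ℝ}

lemma setIntegral_eq_setIntegral_inter_unitDisk
    (hfD : ∀ x : ℝ × ℝ, 1 < x.1 ^ 2 + x.2 ^ 2 → f x = 0) (S : Set (ℝ × ℝ)) :
    ∫ x in S, f x = ∫ x in S ∩ unitDisk, f x := by
  have hf : unitDisk.indicator f = f :=
    indicator_eq_self.2 fun x hx => not_lt.1 fun h => hx (hfD x h)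
  rw [← setIntegral_indicator measurableSet_unitDisk, hf]

lemma cdfOf_lineProj_eq_zero_of_lt (hf : Integrable f)
    (hfD : ∀ x : ℝ × ℝ, 1 < x.1 ^ 2 + x.2 ^ 2 → f x = 0) (φ : ℝ) {t : ℝ} (ht : t < -1) :
    cdfOf (lineProj f φ) t = 0 := by
  have hempty : {x : ℝ × ℝ | x.1 * cos φ + x.2 * sin φ ≤ t} ∩ unitDisk = ∅ :=
    eq_empty_of_forall_notMem fun x ⟨hxt, hx⟩ => by
      linarith [(abs_le.1 (abs_inner_dir_le_one hx φ)).1, show _ ≤ t from hxt]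
  rw [cdfOf_lineProj hf, setIntegral_eq_setIntegral_inter_unitDisk hfD, hempty,
    setIntegral_empty]

lemma cdfOf_lineProj_one (hf1 : ∫ x, f x = 1)
    (hfD : ∀ x : ℝ × ℝ, 1 < x.1 ^ 2 + x.2 ^ 2 → f x = 0) (φ : ℝ) :
    cdfOf (lineProj f φ) 1 = 1 := by
  have hf : Integrable f := .of_integral_ne_zero (by rw [hf1]; exact one_ne_zero)
  have hdisk : unitDisk ⊆ {x : ℝ × ℝ | x.1 * cos φ + x.2 * sin φ ≤ 1} := fun x hx =>
    (abs_le.1 (abs_inner_dir_le_one hx φ)).2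
  calc cdfOf (lineProj f φ) 1 = ∫ x in unitDisk, f x := by
        rw [cdfOf_lineProj hf, setIntegral_eq_setIntegral_inter_unitDisk hfD,
          inter_eq_right.2 hdisk]
    _ = ∫ x in univ, f x := by rw [setIntegral_eq_setIntegral_inter_unitDisk hfD univ, univ_inter]
    _ = 1 := by rw [setIntegral_univ, hf1]

lemma cdfOf_lineProj_le_cdfOf_lineProj_add (hf0 : ∀ x, 0 ≤ f x) (hf : Integrable f)
    (hfD : ∀ x : ℝ × ℝ, 1 < x.1 ^ 2 + x.2 ^ 2 → f x = 0) (φ ψ a : ℝ) :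
    cdfOf (lineProj f φ) a ≤ cdfOf (lineProj f ψ) (a + |φ - ψ|) := by
  have hnested : {x : ℝ × ℝ | x.1 * cos φ + x.2 * sin φ ≤ a} ∩ unitDisk ⊆
      {x : ℝ × ℝ | x.1 * cos ψ + x.2 * sin ψ ≤ a + |φ - ψ|} := fun x ⟨hxa, hx⟩ => by
    show x.1 * cos ψ + x.2 * sin ψ ≤ a + |φ - ψ|
    linarith [(abs_le.1 (abs_inner_dir_sub_le hx φ ψ)).1, show _ ≤ a from hxa]
  rw [cdfOf_lineProj hf, cdfOf_lineProj hf, setIntegral_eq_setIntegral_inter_unitDisk hfD]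
  exact setIntegral_mono_set hf.integrableOn (.of_forall hf0) hnested.eventuallyLE

end DiskSupported

section Quantile

variable {μ ν : ℝ → ℝ} {z : ℝ}

lemma bddBelow_setOf_le_cdfOf (hz : 0 < z) {b : ℝ} (hb : ∀ t < b, cdfOf μ t = 0) :
    BddBelow {t | z ≤ cdfOf μ t} :=
  ⟨b, fun t ht => not_lt.1 fun htb => by
    rw [mem_ofPred_eq, hb t htb] at ht
    linarith⟩

lemma nonempty_setOf_le_cdfOf (hz : z ≤ 1) {c : ℝ} (hc : cdfOf μ c = 1) :
    {t | z ≤ cdfOf μ t}.Nonempty :=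
  ⟨c, by rwa [mem_ofPred_eq, hc]⟩

lemma quantileOf_le_quantileOf_add {δ : ℝ} (hμν : ∀ a, cdfOf μ a ≤ cdfOf ν (a + δ))
    (hμ : {t | z ≤ cdfOf μ t}.Nonempty) (hν : BddBelow {t | z ≤ cdfOf ν t}) :
    quantileOf ν z ≤ quantileOf μ z + δ := by
  rw [← sub_le_iff_le_add]
  exact le_csInf hμ fun t ht => sub_le_iff_le_add.2 (csInf_le hν (le_trans ht (hμν t)))

lemma abs_quantileOf_sub_le {δ : ℝ} (hμν : ∀ a, cdfOf μ a ≤ cdfOf ν (a + δ))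
    (hνμ : ∀ a, cdfOf ν a ≤ cdfOf μ (a + δ))
    (hμ : {t | z ≤ cdfOf μ t}.Nonempty) (hν : {t | z ≤ cdfOf ν t}.Nonempty)
    (hμb : BddBelow {t | z ≤ cdfOf μ t}) (hνb : BddBelow {t | z ≤ cdfOf ν t}) :
    |quantileOf μ z - quantileOf ν z| ≤ δ := by
  have h₁ := quantileOf_le_quantileOf_add hμν hμ hνb
  have h₂ := quantileOf_le_quantileOf_add hνμ hν hμb
  rw [abs_sub_le_iff]
  constructor <;> linarith

end Quantile

lemma wasserstein_le_of_abs_quantileOf_sub_le {μ ν : ℝ → ℝ} {p δ : ℝ} (hp : 0 < p)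
    (hδ : 0 ≤ δ) (h : ∀ z ∈ Ioo (0 : ℝ) 1, |quantileOf μ z - quantileOf ν z| ≤ δ) :
    wasserstein p μ ν ≤ δ := by
  have hpow : wassersteinPow p μ ν ≤ δ ^ p :=
    calc wassersteinPow p μ ν ≤ ∫ _ in Ioo (0 : ℝ) 1, δ ^ p := by
          refine integral_mono_of_nonneg (.of_forall fun _ => by positivity)
            (integrableOn_const measure_Ioo_lt_top.ne) ?_
          exact (ae_restrict_iff' measurableSet_Ioo).2 <| .of_forall fun z hz =>
            rpow_le_rpow (abs_nonneg _) (h z hz) hp.le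
      _ = δ ^ p := by simp
  calc wasserstein p μ ν ≤ (δ ^ p) ^ (1 / p) :=
        rpow_le_rpow (integral_nonneg fun _ => by positivity) hpow (by positivity)
    _ = δ := by rw [← rpow_mul hδ, mul_one_div_cancel hp.ne', rpow_one]

theorem wasserstein_lineProj_le_abs_sub {f : ℝ × ℝ → ℝ} (hf0 : ∀ x, 0 ≤ f x)
    (hf1 : ∫ x, f x = 1) (hfD : ∀ x : ℝ × ℝ, 1 < x.1 ^ 2 + x.2 ^ 2 → f x = 0)
    {p : ℝ} (hp : 0 < p) (φ ψ : ℝ) :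
    wasserstein p (lineProj f φ) (lineProj f ψ) ≤ |φ - ψ| := by
  have hf : Integrable f := .of_integral_ne_zero (by rw [hf1]; exact one_ne_zero)
  refine wasserstein_le_of_abs_quantileOf_sub_le hp (abs_nonneg _) fun z hz => ?_
  have hne χ := nonempty_setOf_le_cdfOf hz.2.le (cdfOf_lineProj_one hf1 hfD χ)
  have hbdd χ := bddBelow_setOf_le_cdfOf hz.1 fun _ => cdfOf_lineProj_eq_zero_of_lt hf hfD χ
  have hshift χ χ' := cdfOf_lineProj_le_cdfOf_lineProj_add hf0 hf hfD χ χ'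
  exact abs_quantileOf_sub_le (hshift φ ψ) (by simpa only [abs_sub_comm] using hshift ψ φ)
    (hne φ) (hne ψ) (hbdd φ) (hbdd ψ)

/-- If `f` is a probability density supported on the closed unit disk and two lines through the
origin differ by angle `θ ≥ 0`, then the `p`-Wasserstein distance between the corresponding 1-D
projections of `f` is at most `θ`: `d_{Wp}(P₀ f, P₀ (f ∘ R_θ⁻¹)) ≤ θ`. -/
theorem wasserstein_projection_rotation_stability
    (f : ℝ × ℝ → ℝ)
    (hfnonneg : ∀ x, 0 ≤ f x)
    (hfint : ∫ x : ℝ × ℝ, f x = 1)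
    (hfsupp : ∀ x : ℝ × ℝ, 1 < x.1 ^ 2 + x.2 ^ 2 → f x = 0)
    (θ : ℝ) (hθ : 0 ≤ θ) (p : ℝ) (hp : 1 ≤ p) :
    wasserstein p (lineProj f 0) (lineProj (rotImage θ f) 0) ≤ θ := by
  rw [lineProj_rotImage, zero_sub]
  simpa [abs_of_nonneg hθ] using
    wasserstein_lineProj_le_abs_sub hfnonneg hfint hfsupp (by linarith) 0 (-θ)
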